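/- arXiv:1109.4626 — 2 statements merged into one kernel-verified Lean document; each statement's English description precedes it below -/
import Mathlib

section
/- Let c = (c_1,...,c_n) be a child sequence, τ a uniformly random permutation of [n], and C = τ(c). Set S_0(C) = 0, S_i(C) = sum_{j≤i}(C_j - 1), and let F_i be the sigma-field generated by S_0,...,S_i. Then the process M_i = (S_i(C) + 1)/(n - i) for 0 ≤ i ≤ n-1 (with the convention 0/0 = 1 at i = n) is a martingale with respect to (F_i): E[(S_{i+1}+1)/(n-i-1) | F_i] = (S_i+1)/(n-i) for i < n-1. -/
/-- Partial sum `S_k = ∑_{i=1}^k (c_i - 1)` of a length-`n` sequence (0-indexed). -/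
def pS {n : ℕ} (c : Fin n → ℕ) (k : ℕ) : ℤ :=
  ∑ i : Fin n, if (i : ℕ) < k then (c i : ℤ) - 1 else 0

/-- Cyclic shift of a sequence by `j`. -/
def cshift {n : ℕ} (j : Fin n) (c : Fin n → ℕ) : Fin n → ℕ := fun i => c (i + j)

/-- A tree sequence: partial sums are nonnegative before index `n`
(equivalently, the queue `S_i + 1` stays strictly positive for `i < n`). -/
def IsTreeSeq {n : ℕ} (c : Fin n → ℕ) : Prop := ∀ k < n, 0 ≤ pS c k


/-- The atom of the sigma-field `F_i = σ(S_0,…,S_i)` containing a given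
rearrangement `c ∘ τ` of `c`: all permutations producing the same initial
partial sums `S_0,…,S_i`. -/
def atomF {n : ℕ} (c : Fin n → ℕ) (i : ℕ) (τ : Equiv.Perm (Fin n)) :
    Finset (Equiv.Perm (Fin n)) :=
  Finset.univ.filter fun τ' => ∀ j ≤ i, pS (c ∘ τ') j = pS (c ∘ τ) j

lemma pS_succ {n : ℕ} (c : Fin n → ℕ) (k : ℕ) (hk : k < n) :
    pS c (k + 1) = pS c k + ((c ⟨k, hk⟩ : ℤ) - 1) := by
  unfold pS
  have h : ∀ i : Fin n, (if (i : ℕ) < k + 1 then (c i : ℤ) - 1 else 0)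
      = (if (i : ℕ) < k then (c i : ℤ) - 1 else 0)
        + (if i = ⟨k, hk⟩ then (c i : ℤ) - 1 else 0) := by
    intro i
    by_cases h1 : (i : ℕ) < k
    · have h2 : i ≠ ⟨k, hk⟩ := by
        intro h; apply absurd h1; simp [h]
      simp [h1, Nat.lt_succ_of_lt h1, h2]
    · by_cases h2 : (i : ℕ) = k
      · have h3 : i = ⟨k, hk⟩ := Fin.ext h2
        simp [h3, h1]
      · have h3 : i ≠ ⟨k, hk⟩ := fun h => h2 (by rw [h])
        have h4 : ¬ (i : ℕ) < k + 1 := by omega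
        simp [h1, h3, h4]
  simp_rw [h, Finset.sum_add_distrib]
  congr 1
  rw [Finset.sum_ite_eq' Finset.univ (⟨k, hk⟩ : Fin n)]
  simp

lemma mem_atomF_iff {n : ℕ} (c : Fin n → ℕ) (i : ℕ) (τ τ' : Equiv.Perm (Fin n)) :
    τ' ∈ atomF c i τ ↔ ∀ j : Fin n, (j : ℕ) < i → c (τ' j) = c (τ j) := by
  simp only [atomF, Finset.mem_filter, Finset.mem_univ, true_and]
  constructor
  · intro h j hj
    have h1 := h (j : ℕ) (le_of_lt hj)
    have h2 := h ((j : ℕ) + 1) hj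
    rw [pS_succ (c ∘ τ') (j : ℕ) j.isLt, pS_succ (c ∘ τ) (j : ℕ) j.isLt, h1] at h2
    have : ((c (τ' j) : ℤ)) = (c (τ j) : ℤ) := by
      simpa [Function.comp, Fin.eta] using h2
    exact_mod_cast this
  · intro h j hj
    unfold pS
    apply Finset.sum_congr rfl
    intro k _
    by_cases hk : (k : ℕ) < j
    · have := h k (lt_of_lt_of_le hk hj)
      simp [hk, Function.comp, this]
    · simp [hk]

lemma card_filter_lt {n i : ℕ} (hin : i < n) :
    (Finset.univ.filter fun k : Fin n => (k : ℕ) < i).card = i := by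
  have : (Finset.univ.filter fun k : Fin n => (k : ℕ) < i) = Finset.Iio ⟨i, hin⟩ := by
    ext k; simp [Fin.lt_def]
  rw [this, Fin.card_Iio]

/-- Martingale property of `M_i = (S_i + 1)/(n - i)` for the partial sums of a
uniformly random rearrangement `C = τ(c)` of a child sequence `c`, with respect
to the filtration `F_i = σ(S_0,…,S_i)`: on each atom of `F_i`,
`E[(S_{i+1}+1)/(n-i-1) | F_i] = (S_i+1)/(n-i)` for `i < n-1`. -/
theorem stmt4 {n : ℕ} (hn : 0 < n) (c : Fin n → ℕ) (hc : ∑ i, c i = n - 1)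
    (i : ℕ) (hi : i < n - 1) (τ : Equiv.Perm (Fin n)) :
    ∑ τ' ∈ atomF c i τ, ((pS (c ∘ τ') (i + 1) : ℝ) + 1) / ((n : ℝ) - (i + 1))
      = (atomF c i τ).card * (((pS (c ∘ τ) i : ℝ) + 1) / ((n : ℝ) - i)) := by
  have hin : i < n := by omega
  have hi1 : i + 1 < n := by omega
  set pi : Fin n := ⟨i, hin⟩ with hpi
  set A := atomF c i τ with hA
  set S : ℤ := pS (c ∘ τ) i with hS
  have hSi : ∀ τ' ∈ A, pS (c ∘ τ') i = S := by
    intro τ' h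
    simp only [hA, atomF, Finset.mem_filter] at h
    exact h.2 i le_rfl
  have hsucc : ∀ τ' ∈ A, pS (c ∘ τ') (i + 1) = S + ((c (τ' pi) : ℤ) - 1) := by
    intro τ' h
    rw [pS_succ (c ∘ τ') i hin, hSi τ' h]
    rfl
  set T : ℤ := ∑ τ' ∈ A, (c (τ' pi) : ℤ) with hT
  -- swap symmetry: for any position k ≥ i, the sum of c (τ' k) over the atom equals T
  have hswap : ∀ k : Fin n, i ≤ (k : ℕ) → ∑ τ' ∈ A, (c (τ' k) : ℤ) = T := by
    intro k hk
    set e : Equiv.Perm (Fin n) := Equiv.swap pi k with he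
    have hefix : ∀ j : Fin n, (j : ℕ) < i → e j = j := by
      intro j hj
      apply Equiv.swap_apply_of_ne_of_ne
      · intro h; apply absurd hj; simp [h, hpi]
      · intro h; subst h; omega
    have hmem : ∀ τ' : Equiv.Perm (Fin n), τ' ∈ A → τ' * e ∈ A := by
      intro τ' hτ'
      rw [hA, mem_atomF_iff] at *
      intro j hj
      rw [Equiv.Perm.mul_apply, hefix j hj]
      exact hτ' j hj
    have hee : e * e = 1 := Equiv.swap_mul_self pi k
    rw [hT]
    apply Finset.sum_nbij' (fun τ' => τ' * e) (fun τ' => τ' * e)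
    · intro τ' hτ'; exact hmem τ' hτ'
    · intro τ' hτ'; exact hmem τ' hτ'
    · intro τ' _; rw [mul_assoc, hee, mul_one]
    · intro τ' _; rw [mul_assoc, hee, mul_one]
    · intro τ' _
      rw [Equiv.Perm.mul_apply, he, Equiv.swap_apply_left]
  -- value of the sum of the first i entries on the atom
  have hfirst : ∀ τ' ∈ A, ∑ k ∈ (Finset.univ.filter fun k : Fin n => (k : ℕ) < i),
      (c (τ' k) : ℤ) = S + i := by
    intro τ' hτ'
    have h1 : pS (c ∘ τ') i
        = (∑ k ∈ (Finset.univ.filter fun k : Fin n => (k : ℕ) < i), (c (τ' k) : ℤ))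
          - ((Finset.univ.filter fun k : Fin n => (k : ℕ) < i).card : ℤ) := by
      unfold pS
      rw [Finset.sum_ite, Finset.sum_const_zero, add_zero, Finset.sum_sub_distrib]
      simp [Function.comp]
    rw [hSi τ' hτ', card_filter_lt hin] at h1
    omega
  -- total sum over all positions for a permutation
  have htotal : ∀ τ' : Equiv.Perm (Fin n), ∑ k : Fin n, (c (τ' k) : ℤ) = (n : ℤ) - 1 := by
    intro τ'
    rw [Equiv.sum_comp τ' (fun k => (c k : ℤ))]
    rw [← Nat.cast_sum, hc]
    omega
  -- key counting identity
  have hkey : ((n : ℤ) - i) * T = (A.card : ℤ) * ((n : ℤ) - 1 - S - i) := by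
    have hsplit : ∑ k : Fin n, ∑ τ' ∈ A, (c (τ' k) : ℤ)
        = (∑ k ∈ (Finset.univ.filter fun k : Fin n => (k : ℕ) < i), ∑ τ' ∈ A, (c (τ' k) : ℤ))
          + ∑ k ∈ (Finset.univ.filter fun k : Fin n => ¬ (k : ℕ) < i), ∑ τ' ∈ A, (c (τ' k) : ℤ) :=
      (Finset.sum_filter_add_sum_filter_not _ _ _).symm
    have h1 : ∑ k : Fin n, ∑ τ' ∈ A, (c (τ' k) : ℤ) = (A.card : ℤ) * ((n : ℤ) - 1) := by
      rw [Finset.sum_comm]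
      rw [Finset.sum_congr rfl (fun τ' _ => htotal τ')]
      rw [Finset.sum_const, nsmul_eq_mul]
    have h2 : ∑ k ∈ (Finset.univ.filter fun k : Fin n => (k : ℕ) < i), ∑ τ' ∈ A, (c (τ' k) : ℤ)
        = (A.card : ℤ) * (S + i) := by
      rw [Finset.sum_comm]
      rw [Finset.sum_congr rfl (fun τ' hτ' => hfirst τ' hτ')]
      rw [Finset.sum_const, nsmul_eq_mul]
    have h3 : ∑ k ∈ (Finset.univ.filter fun k : Fin n => ¬ (k : ℕ) < i), ∑ τ' ∈ A, (c (τ' k) : ℤ)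
        = ((n : ℤ) - i) * T := by
      rw [Finset.sum_congr rfl (fun k hk => hswap k (by
        simp only [Finset.mem_filter] at hk; omega))]
      rw [Finset.sum_const, nsmul_eq_mul]
      congr 1
      have hcard : (Finset.univ.filter fun k : Fin n => ¬ (k : ℕ) < i).card = n - i := by
        have h4 := Finset.card_filter_add_card_filter_not
          (s := (Finset.univ : Finset (Fin n))) (p := fun k : Fin n => (k : ℕ) < i)
        rw [card_filter_lt hin, Finset.card_univ, Fintype.card_fin] at h4
        omega
      rw [hcard]
      push_cast [Nat.cast_sub (le_of_lt hin)]
      ring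
    rw [hsplit, h2, h3] at h1
    linarith
  -- now the real computation
  have hd1 : ((n : ℝ) - (i + 1)) ≠ 0 := by
    have : (i : ℝ) + 1 < n := by exact_mod_cast hi1
    linarith
  have hd2 : ((n : ℝ) - i) ≠ 0 := by
    have : (i : ℝ) < n := by exact_mod_cast hin
    linarith
  have hL : ∑ τ' ∈ A, ((pS (c ∘ τ') (i + 1) : ℝ) + 1) / ((n : ℝ) - (i + 1))
      = ((A.card : ℝ) * S + T) / ((n : ℝ) - (i + 1)) := by
    rw [← Finset.sum_div]
    congr 1
    have hterm : ∀ τ' ∈ A, ((pS (c ∘ τ') (i + 1) : ℝ) + 1) = (S : ℝ) + (c (τ' pi) : ℝ) := by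
      intro τ' hτ'; rw [hsucc τ' hτ']; push_cast; ring
    rw [Finset.sum_congr rfl hterm, Finset.sum_add_distrib, Finset.sum_const, nsmul_eq_mul, hT]
    push_cast
    ring
  rw [hL]
  have hkeyR : ((n : ℝ) - i) * T = (A.card : ℝ) * ((n : ℝ) - 1 - S - i) := by
    exact_mod_cast hkey
  field_simp
  ring_nf
  ring_nf at hkeyR
  nlinarith [hkeyR]
end

section
/- Let T be a plane tree whose child sequence has no entries equal to 1 (every internal node has at least 2 children). For a node u of T at depth |u|, let λ(u) and ρ(u) be the indices of u in lexicographic DFS order and reverse-lexicographic DFS order respectively, and let Q^l, Q^r be the corresponding queue processes. Then max(Q^l_{λ(u)}(T), Q^r_{ρ(u)}(T)) ≥ |u|/2. -/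
/-!
Descending from a node with `c` children into its child of index `i` (counting from `0`) adds
the `c - 1 - i` later siblings to the lex-DFS queue and the `i` earlier siblings to the rev-DFS
queue, so the sum of the two queues grows by `c - 1 ≥ 1` at every ancestor of `u`. At the root
both queues are nonnegative, hence `Q^l_{λ(u)} + Q^r_{ρ(u)} ≥ |u|`.
-/

/-- A plane (rooted ordered) tree: a root together with an ordered list of subtrees. -/
inductive PlaneTree where
  | node : List PlaneTree → PlaneTree

namespace PlaneTree

/-- Number of nodes. -/
def size : PlaneTree → ℕ
  | node l => 1 + (l.attach.map fun t => size t.1).sum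
decreasing_by simp only [PlaneTree.node.sizeOf_spec]; have := List.sizeOf_lt_of_mem t.2; omega

/-- The multiset of the numbers of children of the nodes of a plane tree. -/
def childCounts : PlaneTree → Multiset ℕ
  | node l => l.length ::ₘ (l.attach.map fun t => childCounts t.1).sum
decreasing_by simp only [PlaneTree.node.sizeOf_spec]; have := List.sizeOf_lt_of_mem t.2; omega

/-- Number of nodes at depth `k`. -/
def nodesAt : ℕ → PlaneTree → ℕ
  | 0, _ => 1
  | k + 1, node l => (l.map (nodesAt k)).sum

/-- Width: maximum number of nodes at any single depth. -/
noncomputable def width (T : PlaneTree) : ℕ := sSup (Set.range fun k => nodesAt k T)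

/-- Height: greatest depth of any node. -/
noncomputable def height (T : PlaneTree) : ℕ := sSup {k | nodesAt k T ≠ 0}

/-- `T` has child sequence `c` iff the multiset of child-counts of its nodes is
the multiset of entries of `c`. -/
def hasChildSeq {n : ℕ} (c : Fin n → ℕ) (T : PlaneTree) : Prop :=
  childCounts T = Multiset.map c Finset.univ.val


/-- Child-counts of the nodes of a forest in lexicographic depth-first order. -/
def lexDfsSeq : List PlaneTree → List ℕ
  | [] => []
  | node l :: ts => l.length :: lexDfsSeq (l ++ ts)
termination_by l => (l.map size).sum
decreasing_by
  simp only [List.map_append, List.sum_append, List.map_cons, List.sum_cons, size]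
  have : (l.attach.map fun t => size t.1).sum = (l.map size).sum := by
    congr 1; simp [List.attach_map_val]
  omega

/-- Child-counts of the nodes of a forest in reverse-lexicographic depth-first
order (lex-DFS of the mirror image). -/
def revDfsSeq : List PlaneTree → List ℕ
  | [] => []
  | node l :: ts => l.length :: revDfsSeq (l.reverse ++ ts)
termination_by l => (l.map size).sum
decreasing_by
  simp only [List.map_append, List.sum_append, List.map_cons, List.sum_cons, size,
    List.map_reverse, List.sum_reverse, List.unattach_reverse, List.unattach_attach]
  have : (l.attach.map fun t => size t.1).sum = (l.map size).sum := by
    congr 1; simp [List.attach_map_val]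
  omega

/-- The queue process associated to an exploration child-count sequence `s`:
`Q_0 = 1`, `Q_i = Q_{i-1} - 1 + s_i`. -/
def queue (s : List ℕ) (i : ℕ) : ℤ := 1 + ∑ j ∈ Finset.range i, ((s.getD j 1 : ℤ) - 1)

/-- The subtree of `T` rooted at the node with Ulam–Harris address `p`
(a list of child indices), if it exists. -/
def subtreeAt : PlaneTree → List ℕ → Option PlaneTree
  | t, [] => some t
  | node l, i :: p =>
    match l[i]? with
    | some t => subtreeAt t p
    | none => none
termination_by _ p => p.length

/-- The (1-based) index `λ(u)` of the node `u` in the lex-DFS order of `T`: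
lex-DFS visits the addresses in lexicographic order, prefixes first. -/
noncomputable def lexIdx (T : PlaneTree) (u : List ℕ) : ℕ :=
  {v : List ℕ | (subtreeAt T v).isSome ∧ (List.Lex (· < ·) v u ∨ v = u)}.ncard

/-- The (1-based) index `ρ(u)` of the node `u` in the rev-DFS order of `T`. -/
noncomputable def revIdx (T : PlaneTree) (u : List ℕ) : ℕ :=
  {v : List ℕ | (subtreeAt T v).isSome ∧ (List.Lex (· > ·) v u ∨ v = u)}.ncard

end PlaneTree

namespace List

theorem modifyHead_injective {α : Type*} {f : α → α} (hf : Function.Injective f) :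
    Function.Injective (modifyHead f)
  | [], [], _ => rfl
  | a :: l, b :: l', h => by simp_all [hf.eq_iff]
  | [], _ :: _, h | _ :: _, [], h => by simp at h

theorem cons_mem_image_modifyHead_add_iff {S : Set (List ℕ)} {k j : ℕ} {q : List ℕ} :
    j :: q ∈ modifyHead (· + k) '' S ↔ k ≤ j ∧ (j - k) :: q ∈ S := by
  constructor
  · rintro ⟨_ | ⟨i, q'⟩, hS, h⟩
    · simp at h
    · obtain ⟨rfl, rfl⟩ : i + k = j ∧ q' = q := by simpa using h
      simpa using hS
  · rintro ⟨hkj, hS⟩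
    exact ⟨(j - k) :: q, hS, by simp [Nat.sub_add_cancel hkj]⟩

end List

namespace PlaneTree

theorem size_node (l : List PlaneTree) : size (node l) = 1 + (l.map size).sum := by
  rw [size, List.map_attach_eq_pmap, List.pmap_eq_map]

theorem subtreeAt_nil (T : PlaneTree) : subtreeAt T [] = some T := by
  rw [subtreeAt]

theorem subtreeAt_node_cons (l : List PlaneTree) (j : ℕ) (q : List ℕ) :
    subtreeAt (node l) (j :: q) = l[j]?.bind (subtreeAt · q) := by
  rw [subtreeAt]; cases l[j]? <;> rfl

def validAddrs (T : PlaneTree) : Set (List ℕ) := {v | (subtreeAt T v).isSome}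

theorem nil_mem_validAddrs (T : PlaneTree) : [] ∈ validAddrs T := by
  simp [validAddrs, subtreeAt_nil]

theorem cons_mem_validAddrs_node {l : List PlaneTree} {j : ℕ} {q : List ℕ} :
    j :: q ∈ validAddrs (node l) ↔ ∃ t ∈ l[j]?, q ∈ validAddrs t := by
  simp [validAddrs, subtreeAt_node_cons, Option.isSome_bind, Option.any_eq_true]

theorem validAddrs_node_nil : validAddrs (node []) = {[]} := by
  ext (_ | ⟨j, q⟩) <;> simp [nil_mem_validAddrs, cons_mem_validAddrs_node]

theorem validAddrs_node_cons (a : PlaneTree) (l : List PlaneTree) :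
    validAddrs (node (a :: l)) =
      List.cons 0 '' validAddrs a ∪ List.modifyHead (· + 1) '' validAddrs (node l) := by
  ext (_ | ⟨_ | j, q⟩)
  · simp [nil_mem_validAddrs]
  all_goals
    simp only [Set.mem_union, List.cons_mem_image_modifyHead_add_iff]
    simp [cons_mem_validAddrs_node]

theorem encard_validAddrs : ∀ T : PlaneTree, (validAddrs T).encard = size T
  | node [] => by simp [validAddrs_node_nil, size_node]
  | node (a :: l) => by
    have hdisj : Disjoint (List.cons 0 '' validAddrs a)
        (List.modifyHead (· + 1) '' validAddrs (node l)) := by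
      rw [Set.disjoint_left]
      rintro _ ⟨q, -, rfl⟩ h
      simpa using (List.cons_mem_image_modifyHead_add_iff.mp h).1
    rw [validAddrs_node_cons, Set.encard_union_eq hdisj, List.cons_injective.encard_image,
      (List.modifyHead_injective (add_left_injective 1)).encard_image, encard_validAddrs a,
      encard_validAddrs (node l), size_node, size_node, List.map_cons, List.sum_cons]
    push_cast
    ring

theorem finite_validAddrs (T : PlaneTree) : (validAddrs T).Finite :=
  Set.finite_of_encard_eq_coe (encard_validAddrs T)

theorem ncard_validAddrs (T : PlaneTree) : (validAddrs T).ncard = size T := by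
  rw [Set.ncard_def, encard_validAddrs, ENat.toNat_natCast]

theorem validAddrs_take (l : List PlaneTree) (i : ℕ) :
    {v ∈ validAddrs (node l) | ∀ j ∈ v.head?, j < i} = validAddrs (node (l.take i)) := by
  ext (_ | ⟨j, q⟩)
  · simp [nil_mem_validAddrs]
  · by_cases hj : j < i <;> simp [cons_mem_validAddrs_node, hj]

theorem validAddrs_drop (l : List PlaneTree) (k : ℕ) :
    {v ∈ validAddrs (node l) | ∀ j ∈ v.head?, k ≤ j} =
      List.modifyHead (· + k) '' validAddrs (node (l.drop k)) := by
  ext (_ | ⟨j, q⟩)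
  · simp [nil_mem_validAddrs]
  · rw [List.cons_mem_image_modifyHead_add_iff]
    by_cases hj : k ≤ j
    · simp [cons_mem_validAddrs_node, hj, Nat.add_sub_cancel' hj]
    · simp [hj]

noncomputable def lexRank (r : ℕ → ℕ → Prop) (T : PlaneTree) (u : List ℕ) : ℕ :=
  {v ∈ validAddrs T | List.Lex r v u ∨ v = u}.ncard

theorem lexIdx_eq_lexRank (T : PlaneTree) (u : List ℕ) : lexIdx T u = lexRank (· < ·) T u := rfl

theorem revIdx_eq_lexRank (T : PlaneTree) (u : List ℕ) : revIdx T u = lexRank (· > ·) T u := rfl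

theorem lexRank_le_size (r : ℕ → ℕ → Prop) (T : PlaneTree) (u : List ℕ) :
    lexRank r T u ≤ size T :=
  ncard_validAddrs T ▸ Set.ncard_le_ncard (Set.sep_subset _ _) (finite_validAddrs T)

theorem lexRank_nil (r : ℕ → ℕ → Prop) (T : PlaneTree) : lexRank r T [] = 1 := by
  have : {v ∈ validAddrs T | List.Lex r v [] ∨ v = []} = {[]} := by
    ext v; simp +contextual [nil_mem_validAddrs]
  rw [lexRank, this, Set.ncard_singleton]

theorem lexRank_node_cons {r : ℕ → ℕ → Prop} {l : List PlaneTree} {i : ℕ} {t : PlaneTree}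
    (hr : ¬ r i i) (h : l[i]? = some t) (p : List ℕ) :
    lexRank r (node l) (i :: p) =
      {v ∈ validAddrs (node l) | ∀ j ∈ v.head?, r j i}.ncard + lexRank r t p := by
  have hsplit : {v ∈ validAddrs (node l) | List.Lex r v (i :: p) ∨ v = i :: p} =
      {v ∈ validAddrs (node l) | ∀ j ∈ v.head?, r j i} ∪
        List.cons i '' {q ∈ validAddrs t | List.Lex r q p ∨ q = p} := by
    ext (_ | ⟨j, q⟩)
    · simp [nil_mem_validAddrs]
    · by_cases hj : j = i
      · subst hj; simp [cons_mem_validAddrs_node, h, List.cons_lex_cons_iff, hr]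
      · simp [cons_mem_validAddrs_node, List.cons_lex_cons_iff, hj, Ne.symm hj]
  have hdisj : Disjoint {v ∈ validAddrs (node l) | ∀ j ∈ v.head?, r j i}
      (List.cons i '' {q ∈ validAddrs t | List.Lex r q p ∨ q = p}) := by
    rw [Set.disjoint_left]
    rintro _ ⟨-, hv⟩ ⟨q, -, rfl⟩
    exact hr (hv i rfl)
  rw [lexRank, hsplit, Set.ncard_union_eq hdisj
    ((finite_validAddrs _).subset (Set.sep_subset _ _))
    (((finite_validAddrs _).subset (Set.sep_subset _ _)).image _),
    Set.ncard_image_of_injective _ List.cons_injective, lexRank]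

theorem lexIdx_le_size (T : PlaneTree) (u : List ℕ) : lexIdx T u ≤ size T :=
  lexRank_le_size _ T u

theorem revIdx_le_size (T : PlaneTree) (u : List ℕ) : revIdx T u ≤ size T :=
  lexRank_le_size _ T u

theorem lexIdx_node_cons {l : List PlaneTree} {i : ℕ} {t : PlaneTree} (h : l[i]? = some t)
    (p : List ℕ) :
    lexIdx (node l) (i :: p) = 1 + ((l.take i).map size).sum + lexIdx t p := by
  rw [lexIdx_eq_lexRank, lexRank_node_cons (lt_irrefl i) h, validAddrs_take, ncard_validAddrs,
    size_node, lexIdx_eq_lexRank]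

theorem revIdx_node_cons {l : List PlaneTree} {i : ℕ} {t : PlaneTree} (h : l[i]? = some t)
    (p : List ℕ) :
    revIdx (node l) (i :: p) = 1 + ((l.drop (i + 1)).map size).sum + revIdx t p := by
  have hlater : {v ∈ validAddrs (node l) | ∀ j ∈ v.head?, j > i} =
      List.modifyHead (· + (i + 1)) '' validAddrs (node (l.drop (i + 1))) :=
    validAddrs_drop l (i + 1)
  rw [revIdx_eq_lexRank, lexRank_node_cons (r := (· > ·)) (lt_irrefl i) h, hlater,
    Set.ncard_image_of_injective _ (List.modifyHead_injective (add_left_injective _)),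
    ncard_validAddrs, size_node, revIdx_eq_lexRank]

theorem queue_cons_succ (a : ℕ) (s : List ℕ) (n : ℕ) :
    queue (a :: s) (n + 1) = a - 1 + queue s n := by
  simp only [queue, Finset.sum_range_succ', List.getD_cons_succ, List.getD_cons_zero]
  ring

theorem queue_append_of_le {s : List ℕ} (t : List ℕ) {n : ℕ} (h : n ≤ s.length) :
    queue (s ++ t) n = queue s n := by
  unfold queue
  congr 1
  refine Finset.sum_congr rfl fun j hj => ?_
  rw [List.getD_append _ _ _ _ (by have := Finset.mem_range.mp hj; omega)]

theorem queue_append_length_add (s t : List ℕ) (n : ℕ) :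
    queue (s ++ t) (s.length + n) = queue s s.length + queue t n - 1 := by
  unfold queue
  rw [Finset.sum_range_add]
  have hs : ∀ j ∈ Finset.range s.length,
      ((s ++ t).getD j 1 : ℤ) - 1 = (s.getD j 1 : ℤ) - 1 := fun j hj => by
    rw [List.getD_append _ _ _ _ (Finset.mem_range.mp hj)]
  have ht : ∀ j ∈ Finset.range n,
      ((s ++ t).getD (s.length + j) 1 : ℤ) - 1 = (t.getD j 1 : ℤ) - 1 := fun j _ => by
    rw [List.getD_append_right _ _ _ _ (by omega), Nat.add_sub_cancel_left]
  rw [Finset.sum_congr rfl hs, Finset.sum_congr rfl ht]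
  ring

theorem queue_length (s : List ℕ) : queue s s.length = 1 + (s.sum : ℤ) - s.length := by
  induction s with
  | nil => simp [queue]
  | cons a s ih =>
    rw [List.length_cons, queue_cons_succ, ih, List.sum_cons]
    push_cast
    ring

theorem queue_one_nonneg (s : List ℕ) : 0 ≤ queue s 1 := by
  simp [queue]

structure IsDfsSeq (σ : List PlaneTree → List PlaneTree) (f : List PlaneTree → List ℕ) :
    Prop where
  perm (l : List PlaneTree) : (σ l).Perm l
  nil : f [] = []
  cons (l ts : List PlaneTree) : f (node l :: ts) = l.length :: f (σ l ++ ts)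

theorem isDfsSeq_lexDfsSeq : IsDfsSeq id lexDfsSeq where
  perm _ := List.Perm.refl _
  nil := by rw [lexDfsSeq]
  cons _ _ := by rw [lexDfsSeq]; rfl

theorem isDfsSeq_revDfsSeq : IsDfsSeq List.reverse revDfsSeq where
  perm := List.reverse_perm
  nil := by rw [revDfsSeq]
  cons _ _ := by rw [revDfsSeq]

namespace IsDfsSeq

variable {σ : List PlaneTree → List PlaneTree} {f : List PlaneTree → List ℕ}

theorem forest_size_lt (hf : IsDfsSeq σ f) (l ts : List PlaneTree) :
    ((σ l ++ ts).map size).sum < ((node l :: ts).map size).sum := by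
  simp only [List.map_append, List.sum_append, List.map_cons, List.sum_cons, size_node,
    ((hf.perm l).map size).sum_eq]
  omega

theorem append (hf : IsDfsSeq σ f) (ts us : List PlaneTree) :
    f (ts ++ us) = f ts ++ f us := by
  match ts with
  | [] => rw [hf.nil, List.nil_append, List.nil_append]
  | node l :: ts =>
    rw [List.cons_append, hf.cons, hf.cons, ← List.append_assoc, hf.append (σ l ++ ts) us,
      List.cons_append]
termination_by (ts.map size).sum
decreasing_by exact hf.forest_size_lt l ts

theorem length_eq (hf : IsDfsSeq σ f) (ts : List PlaneTree) :
    (f ts).length = (ts.map size).sum := by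
  match ts with
  | [] => rw [hf.nil]; rfl
  | node l :: ts =>
    rw [hf.cons, List.length_cons, hf.length_eq (σ l ++ ts)]
    have := hf.forest_size_lt l ts
    simp only [List.map_append, List.sum_append, List.map_cons, List.sum_cons, size_node,
      ((hf.perm l).map size).sum_eq] at this ⊢
    omega
termination_by (ts.map size).sum
decreasing_by exact hf.forest_size_lt l ts

theorem sum_add_length (hf : IsDfsSeq σ f) (ts : List PlaneTree) :
    (f ts).sum + ts.length = (ts.map size).sum := by
  match ts with
  | [] => rw [hf.nil]; rfl
  | node l :: ts =>
    have ih := hf.sum_add_length (σ l ++ ts)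
    rw [hf.cons]
    simp only [List.map_append, List.sum_append, List.map_cons, List.sum_cons, size_node,
      List.length_append, List.length_cons, ((hf.perm l).map size).sum_eq,
      (hf.perm l).length_eq] at ih ⊢
    omega
termination_by (ts.map size).sum
decreasing_by exact hf.forest_size_lt l ts

theorem queue_forest_size (hf : IsDfsSeq σ f) (ts : List PlaneTree) :
    queue (f ts) (ts.map size).sum = 1 - ts.length := by
  rw [← hf.length_eq, queue_length, hf.length_eq, ← hf.sum_add_length]
  push_cast
  ring

theorem queue_node (hf : IsDfsSeq σ f) {l ls rs : List PlaneTree} {t : PlaneTree}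
    (h : σ l = ls ++ t :: rs) {k : ℕ} (hk : k ≤ size t) :
    queue (f [node l]) (1 + (ls.map size).sum + k) =
      l.length - 1 - ls.length + queue (f [t]) k := by
  have hk' : k ≤ (f [t]).length := by simpa [hf.length_eq] using hk
  rw [hf.cons, List.append_nil, h, hf.append, show t :: rs = [t] ++ rs from rfl, hf.append,
    add_assoc, add_comm 1, queue_cons_succ, ← hf.length_eq ls, queue_append_length_add,
    queue_append_of_le _ hk', hf.length_eq, hf.queue_forest_size]
  ring

end IsDfsSeq

theorem queue_lexDfsSeq_node_cons {l : List PlaneTree} {i : ℕ} {t : PlaneTree}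
    (h : l[i]? = some t) (p : List ℕ) :
    queue (lexDfsSeq [node l]) (lexIdx (node l) (i :: p)) =
      queue (lexDfsSeq [t]) (lexIdx t p) + (l.length - 1 - i) := by
  obtain ⟨hi, rfl⟩ := List.getElem?_eq_some_iff.mp h
  have hl : id l = l.take i ++ l[i] :: l.drop (i + 1) := by
    rw [id, ← List.drop_eq_getElem_cons hi, List.take_append_drop]
  rw [lexIdx_node_cons h, isDfsSeq_lexDfsSeq.queue_node hl (lexIdx_le_size _ p),
    List.length_take_of_le hi.le]
  ring

theorem queue_revDfsSeq_node_cons {l : List PlaneTree} {i : ℕ} {t : PlaneTree}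
    (h : l[i]? = some t) (p : List ℕ) :
    queue (revDfsSeq [node l]) (revIdx (node l) (i :: p)) =
      queue (revDfsSeq [t]) (revIdx t p) + i := by
  obtain ⟨hi, rfl⟩ := List.getElem?_eq_some_iff.mp h
  have hl : l.reverse = (l.drop (i + 1)).reverse ++ l[i] :: (l.take i).reverse := by
    conv_lhs => rw [← List.take_append_drop i l, List.drop_eq_getElem_cons hi]
    simp
  rw [revIdx_node_cons h, ← List.sum_reverse, ← List.map_reverse,
    isDfsSeq_revDfsSeq.queue_node hl (revIdx_le_size _ p), List.length_reverse, List.length_drop]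
  omega

theorem length_le_queue_lexDfsSeq_add_queue_revDfsSeq (T : PlaneTree)
    (hone : ∀ (p : List ℕ) (l : List PlaneTree),
      subtreeAt T p = some (node l) → l.length ≠ 1)
    (u : List ℕ) (hu : (subtreeAt T u).isSome) :
    (u.length : ℤ) ≤
      queue (lexDfsSeq [T]) (lexIdx T u) + queue (revDfsSeq [T]) (revIdx T u) := by
  induction u generalizing T with
  | nil =>
    rw [lexIdx_eq_lexRank, revIdx_eq_lexRank, lexRank_nil, lexRank_nil]
    have hlex := queue_one_nonneg (lexDfsSeq [T])
    have hrev := queue_one_nonneg (revDfsSeq [T])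
    simp only [List.length_nil, Nat.cast_zero]
    omega
  | cons i p ih =>
    obtain ⟨l⟩ := T
    obtain ⟨t, h, hp⟩ : ∃ t ∈ l[i]?, p ∈ validAddrs t := cons_mem_validAddrs_node.mp hu
    have hi : i < l.length := (List.getElem?_eq_some_iff.mp h).1
    have hl : l.length ≠ 1 := hone [] l (subtreeAt_nil _)
    have ht := ih t
      (fun q l' hq => hone (i :: q) l' (by rw [subtreeAt_node_cons, h]; exact hq)) hp
    rw [queue_lexDfsSeq_node_cons h, queue_revDfsSeq_node_cons h, List.length_cons]
    push_cast
    omega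

end PlaneTree

open PlaneTree in
/-- For a plane tree in which no node has exactly one child, and any node `u`,
the lex-DFS and rev-DFS queue lengths at `u` satisfy
`max(Q^l_{λ(u)}, Q^r_{ρ(u)}) ≥ |u|/2`, where `|u|` is the depth of `u`. -/
theorem stmt14 (T : PlaneTree)
    (hone : ∀ (p : List ℕ) (l : List PlaneTree),
      subtreeAt T p = some (PlaneTree.node l) → l.length ≠ 1)
    (u : List ℕ) (hu : (subtreeAt T u).isSome) :
    (u.length : ℝ) / 2 ≤
      max ((queue (lexDfsSeq [T]) (lexIdx T u) : ℝ))
        ((queue (revDfsSeq [T]) (revIdx T u) : ℝ)) := by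
  have hsum : (u.length : ℝ) ≤ queue (lexDfsSeq [T]) (lexIdx T u) +
      queue (revDfsSeq [T]) (revIdx T u) := by
    exact_mod_cast length_le_queue_lexDfsSeq_add_queue_revDfsSeq T hone u hu
  rw [le_max_iff]
  by_contra! ⟨hlex, hrev⟩
  linarith
end
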